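/- arXiv:2509.09358 — 7 statements merged into one kernel-verified Lean document; each statement's English description precedes it below -/
import Mathlib

section
/- Under the stated hypotheses, the quadratic functional J admits exactly one saddle point; that is, there exists a unique pair (ū₁, ū₂) ∈ U₁ × U₂ such that J(ū₁, u₂) ≤ J(ū₁, ū₂) ≤ J(u₁, ū₂) for all u₁ ∈ U₁ and all u₂ ∈ U₂. -/
/-!
A pair is a saddle point of `J` exactly when it is a critical point: with the other variable
frozen, `J` is a convex (resp. concave) quadratic in `u₁` (resp. `u₂`), whose global minimisers
(resp. maximisers) are the zeros of its gradient. The critical points are the solutions of the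
linear system `M₁₁ u₁ + M₁₂ u₂ = -k₁`, `M₁₂* u₁ + M₂₂ u₂ = -k₂`. After the second equation is
negated, its operator `T (u₁, u₂) = (M₁₁ u₁ + M₁₂ u₂, -M₁₂* u₁ - M₂₂ u₂)` on `U₁ × U₂` is
coercive, because the off-diagonal blocks cancel in `⟪T u, u⟫`, so by Lax–Milgram the system has
exactly one solution.
-/

open scoped RealInnerProductSpace

namespace ContinuousLinearMap

variable {V : Type*} [NormedAddCommGroup V] [InnerProductSpace ℝ V] [CompleteSpace V]

theorem bijective_of_coercive (T : V →L[ℝ] V) {c : ℝ} (hc : 0 < c)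
    (hT : ∀ u, c * ‖u‖ ^ 2 ≤ ⟪T u, u⟫) : Function.Bijective T := by
  have hB : IsCoercive ((innerSL ℝ).comp T) :=
    ⟨c, hc, fun u => by simpa [sq, mul_assoc] using hT u⟩
  have hBT : (hB.continuousLinearEquivOfBilin : V → V) = T := by
    funext v
    exact (hB.unique_continuousLinearEquivOfBilin fun w => rfl).symm
  exact hBT ▸ hB.continuousLinearEquivOfBilin.bijective

end ContinuousLinearMap

section SaddleSystem

variable {E F : Type*} [NormedAddCommGroup E] [InnerProductSpace ℝ E] [CompleteSpace E]
  [NormedAddCommGroup F] [InnerProductSpace ℝ F] [CompleteSpace F]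

open ContinuousLinearMap in
theorem existsUnique_saddle_system {c : ℝ} (hc : 0 < c) {A : E →L[ℝ] E} {D : F →L[ℝ] F}
    (hA : ∀ u, c * ‖u‖ ^ 2 ≤ ⟪A u, u⟫) (hD : ∀ v, ⟪D v, v⟫ ≤ -c * ‖v‖ ^ 2)
    (B : F →L[ℝ] E) (f : E) (g : F) :
    ∃! p : E × F, A p.1 + B p.2 = f ∧ adjoint B p.1 + D p.2 = g := by
  let e := WithLp.prodContinuousLinearEquiv 2 ℝ E F
  let S : E × F →L[ℝ] E × F := (A.coprod B).prod (-((adjoint B).coprod D))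
  have hS : Function.Bijective S := by
    have hT := bijective_of_coercive (e.symm.toContinuousLinearMap ∘L S ∘L e) hc fun x => by
      have hB : ⟪B x.snd, x.fst⟫ = ⟪adjoint B x.fst, x.snd⟫ := by
        rw [adjoint_inner_left, real_inner_comm]
      simp [S, e, WithLp.prod_norm_sq_eq_of_L2, inner_add_left, hB]
      nlinarith [hA x.fst, hD x.snd]
    convert e.bijective.comp (hT.comp e.symm.bijective)
    ext x <;> simp
  refine (existsUnique_congr fun p => ?_).mp (hS.existsUnique (f, -g))
  simp only [S, prod_apply, coprod_apply, neg_apply, Prod.mk.injEq, neg_inj]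

end SaddleSystem

section QuadraticExpansion

variable {E : Type*} [NormedAddCommGroup E] [InnerProductSpace ℝ E]

theorem forall_le_iff_eq_zero_of_quadratic_expansion {f : E → ℝ} {A : E →L[ℝ] E} {a g : E}
    (hA : ∀ d, 0 ≤ ⟪A d, d⟫) (hf : ∀ d, f (a + d) = f a + ⟪A d, d⟫ + 2 * ⟪d, g⟫) :
    (∀ x, f a ≤ f x) ↔ g = 0 := by
  constructor
  · intro hmin
    have hquad : ∀ t : ℝ, 0 ≤ ⟪A g, g⟫ * (t * t) + 2 * ‖g‖ ^ 2 * t + 0 := fun t => by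
      have h := hmin (a + t • g)
      rw [hf, map_smul, real_inner_smul_left, real_inner_smul_right, real_inner_smul_left,
        real_inner_self_eq_norm_sq] at h
      linarith
    have hdisc := discrim_le_zero hquad
    rw [discrim] at hdisc
    have : ‖g‖ ^ 2 = 0 := by nlinarith [sq_nonneg (‖g‖ ^ 2)]
    simpa using this
  · rintro rfl x
    have h := hf (x - a)
    rw [add_sub_cancel, inner_zero_right, mul_zero, add_zero] at h
    linarith [hA (x - a)]

theorem forall_ge_iff_eq_zero_of_quadratic_expansion {f : E → ℝ} {A : E →L[ℝ] E} {a g : E}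
    (hA : ∀ d, ⟪A d, d⟫ ≤ 0) (hf : ∀ d, f (a + d) = f a + ⟪A d, d⟫ + 2 * ⟪d, g⟫) :
    (∀ x, f x ≤ f a) ↔ g = 0 := by
  have := forall_le_iff_eq_zero_of_quadratic_expansion (f := -f) (A := -A) (a := a) (g := -g)
    (fun d => by simpa using hA d) (fun d => by simp [hf]; ring)
  simpa using this

end QuadraticExpansion

section QuadraticFunctional

variable {U₁ U₂ : Type*} [NormedAddCommGroup U₁] [InnerProductSpace ℝ U₁]
  [NormedAddCommGroup U₂] [InnerProductSpace ℝ U₂]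
  (M₁₁ : U₁ →L[ℝ] U₁) (M₂₂ : U₂ →L[ℝ] U₂) (M₁₂ : U₂ →L[ℝ] U₁) (k₁ : U₁) (k₂ : U₂) (c : ℝ)

def quadraticFunctional (p : U₁ × U₂) : ℝ :=
  ⟪M₁₁ p.1, p.1⟫ + ⟪M₂₂ p.2, p.2⟫ + 2 * ⟪p.1, M₁₂ p.2⟫ + 2 * ⟪p.1, k₁⟫ + 2 * ⟪p.2, k₂⟫ + c

variable {M₁₁ M₂₂} [CompleteSpace U₁]

theorem quadraticFunctional_add_fst (h₁₁ : IsSelfAdjoint M₁₁) (a d : U₁) (b : U₂) :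
    quadraticFunctional M₁₁ M₂₂ M₁₂ k₁ k₂ c (a + d, b) =
      quadraticFunctional M₁₁ M₂₂ M₁₂ k₁ k₂ c (a, b) + ⟪M₁₁ d, d⟫
        + 2 * ⟪d, M₁₁ a + M₁₂ b + k₁⟫ := by
  have hsymm : ⟪M₁₁ d, a⟫ = ⟪d, M₁₁ a⟫ := h₁₁.isSymmetric d a
  simp only [quadraticFunctional, map_add, inner_add_left, inner_add_right]
  linarith [real_inner_comm d (M₁₁ a)]

variable [CompleteSpace U₂]

theorem quadraticFunctional_add_snd (h₂₂ : IsSelfAdjoint M₂₂) (a : U₁) (b e : U₂) :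
    quadraticFunctional M₁₁ M₂₂ M₁₂ k₁ k₂ c (a, b + e) =
      quadraticFunctional M₁₁ M₂₂ M₁₂ k₁ k₂ c (a, b) + ⟪M₂₂ e, e⟫
        + 2 * ⟪e, ContinuousLinearMap.adjoint M₁₂ a + M₂₂ b + k₂⟫ := by
  have hsymm : ⟪M₂₂ e, b⟫ = ⟪e, M₂₂ b⟫ := h₂₂.isSymmetric e b
  simp only [quadraticFunctional, map_add, inner_add_left, inner_add_right,
    ContinuousLinearMap.adjoint_inner_right]
  linarith [real_inner_comm a (M₁₂ e), real_inner_comm e (M₂₂ b)]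

theorem quadraticFunctional_saddle_iff (h₁₁ : IsSelfAdjoint M₁₁) (h₂₂ : IsSelfAdjoint M₂₂)
    (hpos : ∀ u, 0 ≤ ⟪M₁₁ u, u⟫) (hneg : ∀ v, ⟪M₂₂ v, v⟫ ≤ 0) (p : U₁ × U₂) :
    let J := quadraticFunctional M₁₁ M₂₂ M₁₂ k₁ k₂ c
    ((∀ u₂, J (p.1, u₂) ≤ J p) ∧ ∀ u₁, J p ≤ J (u₁, p.2)) ↔
      M₁₁ p.1 + M₁₂ p.2 = -k₁ ∧ ContinuousLinearMap.adjoint M₁₂ p.1 + M₂₂ p.2 = -k₂ := by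
  intro J
  rw [← add_eq_zero_iff_eq_neg, ← add_eq_zero_iff_eq_neg, and_comm,
    ← forall_le_iff_eq_zero_of_quadratic_expansion (f := fun u₁ => J (u₁, p.2)) hpos
      (quadraticFunctional_add_fst M₁₂ k₁ k₂ c h₁₁ p.1 · p.2),
    ← forall_ge_iff_eq_zero_of_quadratic_expansion (f := fun u₂ => J (p.1, u₂)) hneg
      (quadraticFunctional_add_snd M₁₂ k₁ k₂ c h₂₂ p.1 p.2)]

end QuadraticFunctional

/-- Under uniform positivity of `M₁₁` and uniform negativity of `M₂₂`, the quadratic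
functional `J` admits exactly one saddle point. -/
theorem quadratic_functional_exists_unique_saddle_point
    {U₁ U₂ : Type*}
    [NormedAddCommGroup U₁] [InnerProductSpace ℝ U₁] [CompleteSpace U₁]
    [NormedAddCommGroup U₂] [InnerProductSpace ℝ U₂] [CompleteSpace U₂]
    (δ : ℝ) (hδ : 0 < δ)
    (M₁₁ : U₁ →L[ℝ] U₁) (M₂₂ : U₂ →L[ℝ] U₂) (M₁₂ : U₂ →L[ℝ] U₁)
    (hM₁₁sa : IsSelfAdjoint M₁₁) (hM₂₂sa : IsSelfAdjoint M₂₂)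
    (hM₁₁ : ∀ u : U₁, δ * ‖u‖ ^ 2 ≤ ⟪M₁₁ u, u⟫)
    (hM₂₂ : ∀ v : U₂, ⟪M₂₂ v, v⟫ ≤ -δ * ‖v‖ ^ 2)
    (k₁ : U₁) (k₂ : U₂) (c : ℝ)
    (J : U₁ × U₂ → ℝ)
    (hJ : ∀ u₁ u₂, J (u₁, u₂) =
      ⟪M₁₁ u₁, u₁⟫ + ⟪M₂₂ u₂, u₂⟫ + 2 * ⟪u₁, M₁₂ u₂⟫
        + 2 * ⟪u₁, k₁⟫ + 2 * ⟪u₂, k₂⟫ + c) :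
    ∃! p : U₁ × U₂,
      (∀ u₂ : U₂, J (p.1, u₂) ≤ J p) ∧ (∀ u₁ : U₁, J p ≤ J (u₁, p.2)) := by
  obtain rfl : J = quadraticFunctional M₁₁ M₂₂ M₁₂ k₁ k₂ c := funext fun p => hJ p.1 p.2
  have hpos (u : U₁) : 0 ≤ ⟪M₁₁ u, u⟫ := by nlinarith [hM₁₁ u, sq_nonneg ‖u‖]
  have hneg (v : U₂) : ⟪M₂₂ v, v⟫ ≤ 0 := by nlinarith [hM₂₂ v, sq_nonneg ‖v‖]
  refine (existsUnique_congr
    (quadraticFunctional_saddle_iff M₁₂ k₁ k₂ c hM₁₁sa hM₂₂sa hpos hneg)).mpr ?_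
  exact existsUnique_saddle_system hδ hM₁₁ hM₂₂ M₁₂ (-k₁) (-k₂)
end

section
/- For every δ > 0 and R > 0 there exists a constant K > 0, depending only on δ and R, with the following property: for any real Hilbert spaces U₁, U₂ and operators M₁₁, M₂₂, M₁₂ satisfying the stated hypotheses together with the operator-norm bound ‖M₁₂‖ ≤ R, and for any b₁ ∈ U₁, b₂ ∈ U₂, the unique solution (x₁, x₂) of the system M₁₁x₁ + M₁₂x₂ = b₁, M₁₂*x₁ + M₂₂x₂ = b₂ satisfies ‖x₁‖ + ‖x₂‖ ≤ K(‖b₁‖ + ‖b₂‖). -/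
open scoped RealInnerProductSpace

lemma add_le_div_mul_of_mul_sq_add_sq_le {δ a b c : ℝ} (hδ : 0 < δ) (ha : 0 ≤ a) (hb : 0 ≤ b)
    (hc : 0 ≤ c) (h : δ * (a ^ 2 + b ^ 2) ≤ c * (a + b)) : a + b ≤ 2 / δ * c := by
  rcases (add_nonneg ha hb).eq_or_lt with hab | hab
  · rw [← hab]
    positivity
  · have hsq : (a + b) ^ 2 ≤ 2 * (a ^ 2 + b ^ 2) := by nlinarith [sq_nonneg (a - b)]
    rw [div_mul_eq_mul_div, le_div_iff₀ hδ]
    nlinarith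

section BlockSystem

variable {E F : Type*} [NormedAddCommGroup E] [InnerProductSpace ℝ E] [CompleteSpace E]
  [NormedAddCommGroup F] [InnerProductSpace ℝ F] [CompleteSpace F]
  {A : E →L[ℝ] E} {D : F →L[ℝ] F} {B : F →L[ℝ] E} {δ : ℝ} {b₁ x₁ : E} {b₂ x₂ : F}

/-- Testing the two equations against `x₁` and `x₂` and subtracting cancels the coupling
terms `⟪B x₂, x₁⟫ = ⟪B† x₁, x₂⟫`. -/
lemma block_system_energy_le_inner
    (hA : ∀ u, δ * ‖u‖ ^ 2 ≤ ⟪A u, u⟫) (hD : ∀ v, ⟪D v, v⟫ ≤ -δ * ‖v‖ ^ 2)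
    (h₁ : A x₁ + B x₂ = b₁) (h₂ : ContinuousLinearMap.adjoint B x₁ + D x₂ = b₂) :
    δ * (‖x₁‖ ^ 2 + ‖x₂‖ ^ 2) ≤ ⟪b₁, x₁⟫ - ⟪b₂, x₂⟫ := by
  have htest₁ : ⟪b₁, x₁⟫ = ⟪A x₁, x₁⟫ + ⟪B x₂, x₁⟫ := by rw [← h₁, inner_add_left]
  have htest₂ : ⟪b₂, x₂⟫ = ⟪B x₂, x₁⟫ + ⟪D x₂, x₂⟫ := by
    rw [← h₂, inner_add_left, ContinuousLinearMap.adjoint_inner_left, real_inner_comm]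
  linarith [hA x₁, hD x₂]

lemma block_system_energy_le_norm_mul
    (hA : ∀ u, δ * ‖u‖ ^ 2 ≤ ⟪A u, u⟫) (hD : ∀ v, ⟪D v, v⟫ ≤ -δ * ‖v‖ ^ 2)
    (h₁ : A x₁ + B x₂ = b₁) (h₂ : ContinuousLinearMap.adjoint B x₁ + D x₂ = b₂) :
    δ * (‖x₁‖ ^ 2 + ‖x₂‖ ^ 2) ≤ (‖b₁‖ + ‖b₂‖) * (‖x₁‖ + ‖x₂‖) := by
  have hc₁ : ⟪b₁, x₁⟫ ≤ ‖b₁‖ * ‖x₁‖ := real_inner_le_norm b₁ x₁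
  have hc₂ : -⟪b₂, x₂⟫ ≤ ‖b₂‖ * ‖x₂‖ := by
    simpa only [inner_neg_right, norm_neg] using real_inner_le_norm b₂ (-x₂)
  nlinarith [block_system_energy_le_inner hA hD h₁ h₂, norm_nonneg b₁, norm_nonneg b₂,
    norm_nonneg x₁, norm_nonneg x₂]

end BlockSystem

theorem block_system_uniform_bound_general
    (δ R : ℝ) (hδ : 0 < δ) :
    ∃ K : ℝ, 0 < K ∧
      ∀ (U₁ U₂ : Type)
        [NormedAddCommGroup U₁] [InnerProductSpace ℝ U₁] [CompleteSpace U₁]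
        [NormedAddCommGroup U₂] [InnerProductSpace ℝ U₂] [CompleteSpace U₂]
        (M₁₁ : U₁ →L[ℝ] U₁) (M₂₂ : U₂ →L[ℝ] U₂) (M₁₂ : U₂ →L[ℝ] U₁),
        IsSelfAdjoint M₁₁ → IsSelfAdjoint M₂₂ →
        (∀ u : U₁, δ * ‖u‖ ^ 2 ≤ ⟪M₁₁ u, u⟫) →
        (∀ v : U₂, ⟪M₂₂ v, v⟫ ≤ -δ * ‖v‖ ^ 2) →
        ‖M₁₂‖ ≤ R →
        ∀ (b₁ : U₁) (b₂ : U₂) (x₁ : U₁) (x₂ : U₂),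
          M₁₁ x₁ + M₁₂ x₂ = b₁ →
          (ContinuousLinearMap.adjoint M₁₂) x₁ + M₂₂ x₂ = b₂ →
          ‖x₁‖ + ‖x₂‖ ≤ K * (‖b₁‖ + ‖b₂‖) := by
  refine ⟨2 / δ, by positivity, ?_⟩
  intro U₁ U₂ _ _ _ _ _ _ M₁₁ M₂₂ M₁₂ _ _ hpos hneg _ b₁ b₂ x₁ x₂ h₁ h₂
  exact add_le_div_mul_of_mul_sq_add_sq_le hδ (norm_nonneg _) (norm_nonneg _)
    (add_nonneg (norm_nonneg _) (norm_nonneg _))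
    (block_system_energy_le_norm_mul hpos hneg h₁ h₂)

/-- A uniform a priori bound, depending only on `δ` and `R`, for solutions of the block
system `M₁₁x₁ + M₁₂x₂ = b₁`, `M₁₂*x₁ + M₂₂x₂ = b₂` when `‖M₁₂‖ ≤ R`. -/
theorem block_system_uniform_bound
    (δ R : ℝ) (hδ : 0 < δ) (hR : 0 < R) :
    ∃ K : ℝ, 0 < K ∧
      ∀ (U₁ U₂ : Type)
        [NormedAddCommGroup U₁] [InnerProductSpace ℝ U₁] [CompleteSpace U₁]
        [NormedAddCommGroup U₂] [InnerProductSpace ℝ U₂] [CompleteSpace U₂]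
        (M₁₁ : U₁ →L[ℝ] U₁) (M₂₂ : U₂ →L[ℝ] U₂) (M₁₂ : U₂ →L[ℝ] U₁),
        IsSelfAdjoint M₁₁ → IsSelfAdjoint M₂₂ →
        (∀ u : U₁, δ * ‖u‖ ^ 2 ≤ ⟪M₁₁ u, u⟫) →
        (∀ v : U₂, ⟪M₂₂ v, v⟫ ≤ -δ * ‖v‖ ^ 2) →
        ‖M₁₂‖ ≤ R →
        ∀ (b₁ : U₁) (b₂ : U₂) (x₁ : U₁) (x₂ : U₂),
          M₁₁ x₁ + M₁₂ x₂ = b₁ →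
          (ContinuousLinearMap.adjoint M₁₂) x₁ + M₂₂ x₂ = b₂ →
          ‖x₁‖ + ‖x₂‖ ≤ K * (‖b₁‖ + ‖b₂‖) :=
  block_system_uniform_bound_general δ R hδ
end

section
/- Uniqueness of strongly regular solutions to the coupled differential Riccati equations: if P_T(·) and P̂_T(·) are two continuously differentiable families [0,T] → (symmetric n×n real matrices)^L, each satisfying Ṗ(t,i) + M(P(t),i) − L(P(t),i) N(P(t),i)⁻¹ L(P(t),i)ᵀ = 0 for all t ∈ [0,T] and i ∈ {1,…,L}, with terminal condition P(T,i) = 0, and each strongly regular (with possibly different constants δ, δ̂ > 0), then P_T(t,i) = P̂_T(t,i) for all t ∈ [0,T] and all i. -/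
open Matrix

/-- The map `P ↦ M(P,i)` of the coupled Riccati equations. -/
noncomputable def calM {n L : ℕ}
    (A C Q : Fin L → Matrix (Fin n) (Fin n) ℝ)
    (pi : Matrix (Fin L) (Fin L) ℝ)
    (P : Fin L → Matrix (Fin n) (Fin n) ℝ) (i : Fin L) : Matrix (Fin n) (Fin n) ℝ :=
  P i * A i + (A i)ᵀ * P i + (C i)ᵀ * P i * C i + Q i + ∑ j, pi i j • P j

/-- The map `P ↦ L(P,i)` of the coupled Riccati equations. -/
noncomputable def calL {n L : ℕ} {mIdx : Type} [Fintype mIdx]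
    (B D : Fin L → Matrix (Fin n) mIdx ℝ)
    (C : Fin L → Matrix (Fin n) (Fin n) ℝ)
    (S : Fin L → Matrix mIdx (Fin n) ℝ)
    (P : Fin L → Matrix (Fin n) (Fin n) ℝ) (i : Fin L) : Matrix (Fin n) mIdx ℝ :=
  P i * B i + (C i)ᵀ * P i * D i + (S i)ᵀ

/-- The map `P ↦ N(P,i)` of the coupled Riccati equations. -/
noncomputable def calN {n L : ℕ} {mIdx : Type} [Fintype mIdx] [DecidableEq mIdx]
    (D : Fin L → Matrix (Fin n) mIdx ℝ)
    (R : Fin L → Matrix mIdx mIdx ℝ)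
    (P : Fin L → Matrix (Fin n) (Fin n) ℝ) (i : Fin L) : Matrix mIdx mIdx ℝ :=
  (D i)ᵀ * P i * D i + R i

/-!
The difference `Δ = P - P̂` of two solutions vanishes at `T` and, by the Riccati equation,
`Δ̇(t) = F(P(t)) - F(P̂(t))` where `F(P) = L N⁻¹ Lᵀ - M`. The maps `M`, `L`, `N` are affine in `P`,
and `L₁N₁⁻¹L₁ᵀ - L₂N₂⁻¹L₂ᵀ` is bounded by `‖L₁ - L₂‖` and `‖N₁ - N₂‖` times norms of `Lₖ` and `Nₖ⁻¹`.
Strong regularity makes `N(P(t))` invertible, so by compactness of `[0,T]` these norms stay bounded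
along both solutions, whence `‖Δ̇‖ ≤ K‖Δ‖`, and Grönwall's inequality run backwards from `T`
gives `Δ = 0`.
-/

theorem eq_zero_of_norm_deriv_le_mul_norm_of_eq_zero_right_end
    {E : Type*} [NormedAddCommGroup E] [NormedSpace ℝ E] {f f' : ℝ → E} {K a b : ℝ}
    (hf : ∀ x ∈ Set.Icc a b, HasDerivWithinAt f (f' x) (Set.Icc a b) x) (hb : f b = 0)
    (bound : ∀ x ∈ Set.Icc a b, ‖f' x‖ ≤ K * ‖f x‖) :
    ∀ x ∈ Set.Icc a b, f x = 0 := by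
  have hmaps : Set.MapsTo (fun s => a + b - s) (Set.Icc a b) (Set.Icc a b) :=
    fun s hs => ⟨by linarith [hs.2], by linarith [hs.1]⟩
  have hg : ∀ s ∈ Set.Icc a b,
      HasDerivWithinAt (fun s => f (a + b - s)) (-f' (a + b - s)) (Set.Icc a b) s := fun s hs => by
    simpa [Function.comp_def] using
      (hf _ (hmaps hs)).scomp s ((hasDerivWithinAt_id s _).const_sub (a + b)) hmaps
  have hrev := eq_zero_of_abs_deriv_le_mul_abs_self_of_eq_zero_right (K := K)
    (fun s hs => (hg s hs).continuousWithinAt)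
    (fun s hs => (hg s ⟨hs.1, hs.2.le⟩).mono_of_mem_nhdsWithin (Icc_mem_nhdsGE_of_mem hs))
    (by simpa using hb) (fun s hs => by simpa using bound _ (hmaps ⟨hs.1, hs.2.le⟩))
  intro x hx
  simpa using hrev (a + b - x) (hmaps hx)

theorem Matrix.PosDef.of_posSemidef_sub_smul_one {m : Type*} [Fintype m] [DecidableEq m]
    {M : Matrix m m ℝ} {δ : ℝ} (hδ : 0 < δ) (h : (M - δ • (1 : Matrix m m ℝ)).PosSemidef) :
    M.PosDef := by
  simpa using PosDef.posSemidef_add h (PosDef.one.smul hδ)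

theorem Matrix.det_ne_zero_of_isSymm_of_posDef_of_neg_posDef {m₁ m₂ : Type*}
    [Fintype m₁] [Fintype m₂] [DecidableEq m₁] [DecidableEq m₂]
    {N : Matrix (m₁ ⊕ m₂) (m₁ ⊕ m₂) ℝ} (hN : N.IsSymm)
    (h₁ : (N.submatrix Sum.inl Sum.inl).PosDef) (h₂ : (-N.submatrix Sum.inr Sum.inr).PosDef) :
    N.det ≠ 0 := by
  intro hdet
  obtain ⟨v, hv, hNv⟩ := exists_mulVec_eq_zero_iff.2 hdet
  have h₂₁ : N.toBlocks₂₁ = N.toBlocks₁₂ᵀ := by ext i j; exact hN.apply (Sum.inl j) (Sum.inr i)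
  rw [← fromBlocks_toBlocks N, fromBlocks_mulVec, h₂₁] at hNv
  set x := v ∘ Sum.inl
  set y := v ∘ Sum.inr
  have hx : N.toBlocks₁₁ *ᵥ x + N.toBlocks₁₂ *ᵥ y = 0 := funext fun a => congrFun hNv (.inl a)
  have hy : N.toBlocks₁₂ᵀ *ᵥ x + N.toBlocks₂₂ *ᵥ y = 0 := funext fun b => congrFun hNv (.inr b)
  -- Pairing the block rows of `N v = 0` with `x` and `y`, both off-diagonal terms become
  -- `x ⬝ᵥ N₁₂ y` by symmetry, so the two definite quadratic forms sum to zero.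
  have hqx : x ⬝ᵥ (N.submatrix Sum.inl Sum.inl *ᵥ x) = -(x ⬝ᵥ (N.toBlocks₁₂ *ᵥ y)) := by
    rw [← dotProduct_neg, ← eq_neg_of_add_eq_zero_left hx]; rfl
  have hqy : y ⬝ᵥ (-N.submatrix Sum.inr Sum.inr *ᵥ y) = x ⬝ᵥ (N.toBlocks₁₂ *ᵥ y) := by
    change y ⬝ᵥ (-N.toBlocks₂₂ *ᵥ y) = _
    rw [neg_mulVec, eq_neg_of_add_eq_zero_right hy, neg_neg, mulVec_transpose, dotProduct_comm,
      dotProduct_mulVec]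
  have hsum : x ⬝ᵥ (N.submatrix Sum.inl Sum.inl *ᵥ x)
      + y ⬝ᵥ (-N.submatrix Sum.inr Sum.inr *ᵥ y) = 0 := by
    rw [hqx, hqy, neg_add_cancel]
  have hx₀ := h₁.posSemidef.dotProduct_mulVec_nonneg x
  have hy₀ := h₂.posSemidef.dotProduct_mulVec_nonneg y
  simp only [star_trivial] at hx₀ hy₀
  have hx0 : x = 0 := by
    by_contra h; linarith [star_trivial x ▸ h₁.dotProduct_mulVec_pos h]
  have hy0 : y = 0 := by
    by_contra h; linarith [star_trivial y ▸ h₂.dotProduct_mulVec_pos h]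
  exact hv (funext fun | .inl a => congrFun hx0 a | .inr b => congrFun hy0 b)

theorem Matrix.mul_inv_mul_transpose_sub {m n : Type*} [Fintype m] [DecidableEq m]
    {α : Type*} [CommRing α] (L₁ L₂ : Matrix n m α) {N₁ N₂ : Matrix m m α}
    (h₁ : IsUnit N₁.det) (h₂ : IsUnit N₂.det) :
    L₁ * N₁⁻¹ * L₁ᵀ - L₂ * N₂⁻¹ * L₂ᵀ = (L₁ - L₂) * N₁⁻¹ * L₁ᵀ
      + L₂ * (N₁⁻¹ * (N₂ - N₁) * N₂⁻¹) * L₁ᵀ + L₂ * N₂⁻¹ * (L₁ - L₂)ᵀ := by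
  have hinv : N₁⁻¹ * (N₂ - N₁) * N₂⁻¹ = N₁⁻¹ - N₂⁻¹ := by
    rw [Matrix.mul_sub, Matrix.sub_mul, Matrix.mul_assoc, mul_nonsing_inv _ h₂,
      nonsing_inv_mul _ h₁, Matrix.mul_one, Matrix.one_mul]
  rw [hinv, transpose_sub]
  simp only [Matrix.sub_mul, Matrix.mul_sub]
  abel

open scoped Matrix.Norms.Frobenius

theorem Matrix.frobenius_norm_mul₃_le {k l m n : Type*} [Fintype k] [Fintype l] [Fintype m]
    [Fintype n] (A : Matrix k l ℝ) (B : Matrix l m ℝ) (C : Matrix m n ℝ) :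
    ‖A * B * C‖ ≤ ‖A‖ * ‖B‖ * ‖C‖ :=
  (frobenius_norm_mul _ _).trans (by gcongr; exact frobenius_norm_mul _ _)

theorem hasDerivWithinAt_of_forall_entries {ι m n : Type*} [Fintype ι] [Fintype m] [Fintype n]
    {f : ℝ → ι → Matrix m n ℝ} {f' : ι → Matrix m n ℝ} {s : Set ℝ} {x : ℝ}
    (h : ∀ i a b, HasDerivWithinAt (fun t => f t i a b) (f' i a b) s x) :
    HasDerivWithinAt f f' s x :=
  hasDerivWithinAt_iff_tendsto_slope.2 <| tendsto_pi_nhds.2 fun i => tendsto_pi_nhds.2 fun a =>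
    tendsto_pi_nhds.2 fun b => hasDerivWithinAt_iff_tendsto_slope.1 (h i a b)

theorem Matrix.norm_mul_inv_mul_transpose_sub_le {m n : Type*} [Fintype m] [Fintype n]
    [DecidableEq m] (L₁ L₂ : Matrix n m ℝ) {N₁ N₂ : Matrix m m ℝ}
    (h₁ : IsUnit N₁.det) (h₂ : IsUnit N₂.det) :
    ‖L₁ * N₁⁻¹ * L₁ᵀ - L₂ * N₂⁻¹ * L₂ᵀ‖ ≤ (‖N₁⁻¹‖ * ‖L₁‖ + ‖L₂‖ * ‖N₂⁻¹‖) * ‖L₁ - L₂‖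
      + ‖L₂‖ * ‖N₁⁻¹‖ * ‖N₂⁻¹‖ * ‖L₁‖ * ‖N₂ - N₁‖ := by
  rw [mul_inv_mul_transpose_sub L₁ L₂ h₁ h₂]
  refine (norm_add₃_le ..).trans ?_
  have e₁ := frobenius_norm_mul₃_le (L₁ - L₂) N₁⁻¹ L₁ᵀ
  have e₂ := frobenius_norm_mul₃_le L₂ (N₁⁻¹ * (N₂ - N₁) * N₂⁻¹) L₁ᵀ
  have e₃ := frobenius_norm_mul₃_le N₁⁻¹ (N₂ - N₁) N₂⁻¹
  have e₄ := frobenius_norm_mul₃_le L₂ N₂⁻¹ (L₁ - L₂)ᵀ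
  rw [frobenius_norm_transpose] at e₁ e₂ e₄
  have : ‖L₂‖ * ‖N₁⁻¹ * (N₂ - N₁) * N₂⁻¹‖ * ‖L₁‖
      ≤ ‖L₂‖ * (‖N₁⁻¹‖ * ‖N₂ - N₁‖ * ‖N₂⁻¹‖) * ‖L₁‖ := by gcongr
  linarith

section RiccatiMaps

variable {n L : ℕ} {m : Type} [Fintype m]

theorem calM_sub_calM (A C Q : Fin L → Matrix (Fin n) (Fin n) ℝ) (pi : Matrix (Fin L) (Fin L) ℝ)
    (X Y : Fin L → Matrix (Fin n) (Fin n) ℝ) (i : Fin L) :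
    calM A C Q pi X i - calM A C Q pi Y i = calM A C 0 pi (X - Y) i := by
  simp only [calM, Pi.sub_apply, Pi.zero_apply, Matrix.sub_mul, Matrix.mul_sub, smul_sub,
    Finset.sum_sub_distrib, add_zero]
  abel

theorem calL_sub_calL (B D : Fin L → Matrix (Fin n) m ℝ) (C : Fin L → Matrix (Fin n) (Fin n) ℝ)
    (S : Fin L → Matrix m (Fin n) ℝ) (X Y : Fin L → Matrix (Fin n) (Fin n) ℝ) (i : Fin L) :
    calL B D C S X i - calL B D C S Y i = calL B D C 0 (X - Y) i := by
  simp only [calL, Pi.sub_apply, Pi.zero_apply, Matrix.sub_mul, Matrix.mul_sub,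
    transpose_zero, add_zero]
  abel

theorem calN_sub_calN [DecidableEq m] (D : Fin L → Matrix (Fin n) m ℝ) (R : Fin L → Matrix m m ℝ)
    (X Y : Fin L → Matrix (Fin n) (Fin n) ℝ) (i : Fin L) :
    calN D R X i - calN D R Y i = calN D 0 (X - Y) i := by
  simp only [calN, Pi.sub_apply, Pi.zero_apply, Matrix.sub_mul, Matrix.mul_sub, add_zero]
  abel

theorem calN_isSymm [DecidableEq m] (D : Fin L → Matrix (Fin n) m ℝ) (R : Fin L → Matrix m m ℝ)
    {X : Fin L → Matrix (Fin n) (Fin n) ℝ} {i : Fin L} (hR : (R i).IsSymm)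
    (hX : (X i).IsSymm) : (calN D R X i).IsSymm := by
  simp only [IsSymm, calN, transpose_add, transpose_mul, transpose_transpose, hR.eq, hX.eq,
    Matrix.mul_assoc]

theorem isUnit_det_calN_of_stronglyRegular {m₁ m₂ : Type} [Fintype m₁] [Fintype m₂]
    [DecidableEq m₁] [DecidableEq m₂] (D : Fin L → Matrix (Fin n) (m₁ ⊕ m₂) ℝ)
    (R : Fin L → Matrix (m₁ ⊕ m₂) (m₁ ⊕ m₂) ℝ) {X : Fin L → Matrix (Fin n) (Fin n) ℝ} {i : Fin L}
    (hR : (R i).IsSymm) (hX : (X i).IsSymm) {δ : ℝ} (hδ : 0 < δ)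
    (h₁ : ((calN D R X i).submatrix Sum.inl Sum.inl - δ • (1 : Matrix m₁ m₁ ℝ)).PosSemidef)
    (h₂ : (-(calN D R X i).submatrix Sum.inr Sum.inr - δ • (1 : Matrix m₂ m₂ ℝ)).PosSemidef) :
    IsUnit (calN D R X i).det :=
  isUnit_iff_ne_zero.2 <| det_ne_zero_of_isSymm_of_posDef_of_neg_posDef (calN_isSymm D R hR hX)
    (.of_posSemidef_sub_smul_one hδ h₁) (.of_posSemidef_sub_smul_one hδ h₂)

theorem norm_calM_zero_le (A C : Fin L → Matrix (Fin n) (Fin n) ℝ) (pi : Matrix (Fin L) (Fin L) ℝ)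
    (X : Fin L → Matrix (Fin n) (Fin n) ℝ) (i : Fin L) :
    ‖calM A C 0 pi X i‖ ≤ (2 * ‖A i‖ + ‖C i‖ * ‖C i‖ + ∑ j, |pi i j|) * ‖X‖ := by
  have hX : ∀ j, ‖X j‖ ≤ ‖X‖ := norm_le_pi_norm X
  have hsum : ‖∑ j, pi i j • X j‖ ≤ (∑ j, |pi i j|) * ‖X‖ := by
    rw [Finset.sum_mul]
    refine (norm_sum_le _ _).trans (Finset.sum_le_sum fun j _ => ?_)
    rw [norm_smul, Real.norm_eq_abs]
    gcongr
    exact hX j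
  simp only [calM, Pi.zero_apply, add_zero]
  have h₁ := frobenius_norm_mul (X i) (A i)
  have h₂ := frobenius_norm_mul (A i)ᵀ (X i)
  have h₃ := frobenius_norm_mul₃_le (C i)ᵀ (X i) (C i)
  rw [frobenius_norm_transpose] at h₂ h₃
  refine (norm_add₄_le ..).trans ?_
  nlinarith [hX i, norm_nonneg (A i), norm_nonneg (C i)]

theorem norm_calL_zero_le (B D : Fin L → Matrix (Fin n) m ℝ)
    (C : Fin L → Matrix (Fin n) (Fin n) ℝ) (X : Fin L → Matrix (Fin n) (Fin n) ℝ) (i : Fin L) :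
    ‖calL B D C 0 X i‖ ≤ (‖B i‖ + ‖C i‖ * ‖D i‖) * ‖X‖ := by
  have hX : ‖X i‖ ≤ ‖X‖ := norm_le_pi_norm X i
  simp only [calL, Pi.zero_apply, transpose_zero, add_zero]
  have h₁ := frobenius_norm_mul (X i) (B i)
  have h₂ := frobenius_norm_mul₃_le (C i)ᵀ (X i) (D i)
  rw [frobenius_norm_transpose] at h₂
  refine (norm_add_le ..).trans ?_
  nlinarith [norm_nonneg (B i), norm_nonneg (C i), norm_nonneg (D i),
    mul_nonneg (norm_nonneg (C i)) (norm_nonneg (D i))]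

theorem norm_calN_zero_le [DecidableEq m] (D : Fin L → Matrix (Fin n) m ℝ)
    (X : Fin L → Matrix (Fin n) (Fin n) ℝ) (i : Fin L) :
    ‖calN D 0 X i‖ ≤ ‖D i‖ * ‖D i‖ * ‖X‖ := by
  have hX : ‖X i‖ ≤ ‖X‖ := norm_le_pi_norm X i
  simp only [calN, Pi.zero_apply, add_zero]
  have h := frobenius_norm_mul₃_le (D i)ᵀ (X i) (D i)
  rw [frobenius_norm_transpose] at h
  nlinarith [mul_nonneg (mul_self_nonneg ‖D i‖) (sub_nonneg.2 hX)]

/-- The coupled Riccati equations read `Ṗ = riccatiField A C Q B D S R pi P`. -/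
noncomputable def riccatiField [DecidableEq m] (A C Q : Fin L → Matrix (Fin n) (Fin n) ℝ)
    (B D : Fin L → Matrix (Fin n) m ℝ) (S : Fin L → Matrix m (Fin n) ℝ)
    (R : Fin L → Matrix m m ℝ) (pi : Matrix (Fin L) (Fin L) ℝ)
    (X : Fin L → Matrix (Fin n) (Fin n) ℝ) : Fin L → Matrix (Fin n) (Fin n) ℝ :=
  fun i => calL B D C S X i * (calN D R X i)⁻¹ * (calL B D C S X i)ᵀ - calM A C Q pi X i

variable [DecidableEq m] (A C Q : Fin L → Matrix (Fin n) (Fin n) ℝ)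
  (B D : Fin L → Matrix (Fin n) m ℝ) (S : Fin L → Matrix m (Fin n) ℝ)
  (R : Fin L → Matrix m m ℝ) (pi : Matrix (Fin L) (Fin L) ℝ)

theorem norm_riccatiField_sub_le {X Y : Fin L → Matrix (Fin n) (Fin n) ℝ} {i : Fin L}
    (hX : IsUnit (calN D R X i).det) (hY : IsUnit (calN D R Y i).det) :
    ‖riccatiField A C Q B D S R pi X i - riccatiField A C Q B D S R pi Y i‖ ≤
      ((‖(calN D R X i)⁻¹‖ * ‖calL B D C S X i‖ + ‖calL B D C S Y i‖ * ‖(calN D R Y i)⁻¹‖)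
          * (‖B i‖ + ‖C i‖ * ‖D i‖)
        + ‖calL B D C S Y i‖ * ‖(calN D R X i)⁻¹‖ * ‖(calN D R Y i)⁻¹‖ * ‖calL B D C S X i‖
          * (‖D i‖ * ‖D i‖)
        + (2 * ‖A i‖ + ‖C i‖ * ‖C i‖ + ∑ j, |pi i j|)) * ‖X - Y‖ := by
  have hquad := norm_mul_inv_mul_transpose_sub_le (calL B D C S X i) (calL B D C S Y i) hX hY
  rw [calL_sub_calL, calN_sub_calN] at hquad
  have hL := norm_calL_zero_le B D C (X - Y) i
  have hN := norm_calN_zero_le D (Y - X) i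
  rw [norm_sub_rev Y X] at hN
  have hM := norm_calM_zero_le A C pi (X - Y) i
  rw [riccatiField, riccatiField, sub_sub_sub_comm, calM_sub_calM]
  refine (norm_sub_le _ _).trans ?_
  have hquad' := hquad.trans (add_le_add (mul_le_mul_of_nonneg_left hL (by positivity))
    (mul_le_mul_of_nonneg_left hN (by positivity)))
  linarith

theorem exists_norm_calL_le_and_norm_inv_calN_le {s : Set ℝ} (hs : IsCompact s)
    {P : ℝ → Fin L → Matrix (Fin n) (Fin n) ℝ} (hP : ContinuousOn P s)
    (hN : ∀ t ∈ s, ∀ i, IsUnit (calN D R (P t) i).det) :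
    ∃ c, 0 ≤ c ∧ ∀ t ∈ s, ∀ i, ‖calL B D C S (P t) i‖ ≤ c ∧ ‖(calN D R (P t) i)⁻¹‖ ≤ c := by
  have hLc : ContinuousOn (fun t i => calL B D C S (P t) i) s := continuousOn_pi.2 fun i =>
    (by unfold calL; fun_prop : Continuous fun X => calL B D C S X i).comp_continuousOn hP
  have hNc : ContinuousOn (fun t i => (calN D R (P t) i)⁻¹) s := continuousOn_pi.2 fun i t ht => by
    obtain ⟨u, hu⟩ := hN t ht i
    refine ContinuousAt.comp_continuousWithinAt (g := Inv.inv)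
      (continuousAt_matrix_inv _ (hu ▸ NormedRing.inverse_continuousAt u)) ?_
    exact (by unfold calN; fun_prop : Continuous fun X => calN D R X i).comp_continuousOn hP t ht
  obtain ⟨c₁, hc₁⟩ := hs.exists_bound_of_continuousOn hLc
  obtain ⟨c₂, hc₂⟩ := hs.exists_bound_of_continuousOn hNc
  refine ⟨max (max c₁ c₂) 0, le_max_right _ _, fun t ht i => ⟨?_, ?_⟩⟩
  · exact (norm_le_pi_norm _ i).trans ((hc₁ t ht).trans (by simp))
  · exact (norm_le_pi_norm (fun i => (calN D R (P t) i)⁻¹) i).trans ((hc₂ t ht).trans (by simp))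

theorem exists_norm_riccatiField_sub_le {s : Set ℝ} (hs : IsCompact s)
    {P₁ P₂ : ℝ → Fin L → Matrix (Fin n) (Fin n) ℝ} (hP₁ : ContinuousOn P₁ s)
    (hP₂ : ContinuousOn P₂ s) (hN₁ : ∀ t ∈ s, ∀ i, IsUnit (calN D R (P₁ t) i).det)
    (hN₂ : ∀ t ∈ s, ∀ i, IsUnit (calN D R (P₂ t) i).det) :
    ∃ K, ∀ t ∈ s, ‖riccatiField A C Q B D S R pi (P₁ t) - riccatiField A C Q B D S R pi (P₂ t)‖
      ≤ K * ‖P₁ t - P₂ t‖ := by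
  obtain ⟨c₁, hc₁_nonneg, hc₁⟩ := exists_norm_calL_le_and_norm_inv_calN_le C B D S R hs hP₁ hN₁
  obtain ⟨c₂, hc₂_nonneg, hc₂⟩ := exists_norm_calL_le_and_norm_inv_calN_le C B D S R hs hP₂ hN₂
  set c := max c₁ c₂
  let K i := (c * c + c * c) * (‖B i‖ + ‖C i‖ * ‖D i‖) + c * c * c * c * (‖D i‖ * ‖D i‖)
    + (2 * ‖A i‖ + ‖C i‖ * ‖C i‖ + ∑ j, |pi i j|)
  have hK : ∀ i, 0 ≤ K i := fun i => by positivity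
  refine ⟨∑ i, K i, fun t ht => (pi_norm_le_iff_of_nonneg (by positivity)).2 fun i => ?_⟩
  have hL₁ := (hc₁ t ht i).1.trans (le_max_left c₁ c₂)
  have hNinv₁ := (hc₁ t ht i).2.trans (le_max_left c₁ c₂)
  have hL₂ := (hc₂ t ht i).1.trans (le_max_right c₁ c₂)
  have hNinv₂ := (hc₂ t ht i).2.trans (le_max_right c₁ c₂)
  calc ‖riccatiField A C Q B D S R pi (P₁ t) i - riccatiField A C Q B D S R pi (P₂ t) i‖
      ≤ _ := norm_riccatiField_sub_le A C Q B D S R pi (hN₁ t ht i) (hN₂ t ht i)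
    _ ≤ K i * ‖P₁ t - P₂ t‖ := by dsimp only [K]; gcongr
    _ ≤ (∑ i, K i) * ‖P₁ t - P₂ t‖ := by
      gcongr; exact Finset.single_le_sum (fun j _ => hK j) (Finset.mem_univ i)

end RiccatiMaps

theorem CDRE_strongly_regular_solution_unique_general
    (n m₁ m₂ L : ℕ)
    (T : ℝ)
    (A C : Fin L → Matrix (Fin n) (Fin n) ℝ)
    (B D : Fin L → Matrix (Fin n) (Fin m₁ ⊕ Fin m₂) ℝ)
    (Q : Fin L → Matrix (Fin n) (Fin n) ℝ)
    (S : Fin L → Matrix (Fin m₁ ⊕ Fin m₂) (Fin n) ℝ)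
    (R : Fin L → Matrix (Fin m₁ ⊕ Fin m₂) (Fin m₁ ⊕ Fin m₂) ℝ) (hR : ∀ i, (R i).IsSymm)
    (pi : Matrix (Fin L) (Fin L) ℝ)
    -- the two solutions and their derivatives
    (P Phat : ℝ → Fin L → Matrix (Fin n) (Fin n) ℝ)
    (P' Phat' : ℝ → Fin L → Matrix (Fin n) (Fin n) ℝ)
    -- symmetry of the values
    (hPsymm : ∀ t ∈ Set.Icc (0 : ℝ) T, ∀ i, (P t i).IsSymm)
    (hPhatsymm : ∀ t ∈ Set.Icc (0 : ℝ) T, ∀ i, (Phat t i).IsSymm)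
    -- continuous differentiability (entrywise)
    (hPderiv : ∀ t ∈ Set.Icc (0 : ℝ) T, ∀ i, ∀ a b : Fin n,
      HasDerivWithinAt (fun s => P s i a b) (P' t i a b) (Set.Icc (0 : ℝ) T) t)
    (hPhatderiv : ∀ t ∈ Set.Icc (0 : ℝ) T, ∀ i, ∀ a b : Fin n,
      HasDerivWithinAt (fun s => Phat s i a b) (Phat' t i a b) (Set.Icc (0 : ℝ) T) t)
    -- the coupled differential Riccati equations
    (hPeq : ∀ t ∈ Set.Icc (0 : ℝ) T, ∀ i,
      P' t i + calM A C Q pi (P t) i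
        - calL B D C S (P t) i * (calN D R (P t) i)⁻¹ * (calL B D C S (P t) i)ᵀ = 0)
    (hPhateq : ∀ t ∈ Set.Icc (0 : ℝ) T, ∀ i,
      Phat' t i + calM A C Q pi (Phat t) i
        - calL B D C S (Phat t) i * (calN D R (Phat t) i)⁻¹ * (calL B D C S (Phat t) i)ᵀ = 0)
    -- the terminal conditions
    (hPterm : ∀ i, P T i = 0) (hPhatterm : ∀ i, Phat T i = 0)
    -- strong regularity, with possibly different constants
    (δ δhat : ℝ) (hδ : 0 < δ) (hδhat : 0 < δhat)
    (hPreg₁ : ∀ t ∈ Set.Icc (0 : ℝ) T, ∀ i,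
      ((calN D R (P t) i).submatrix Sum.inl Sum.inl
        - δ • (1 : Matrix (Fin m₁) (Fin m₁) ℝ)).PosSemidef)
    (hPreg₂ : ∀ t ∈ Set.Icc (0 : ℝ) T, ∀ i,
      (-(calN D R (P t) i).submatrix Sum.inr Sum.inr
        - δ • (1 : Matrix (Fin m₂) (Fin m₂) ℝ)).PosSemidef)
    (hPhatreg₁ : ∀ t ∈ Set.Icc (0 : ℝ) T, ∀ i,
      ((calN D R (Phat t) i).submatrix Sum.inl Sum.inl
        - δhat • (1 : Matrix (Fin m₁) (Fin m₁) ℝ)).PosSemidef)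
    (hPhatreg₂ : ∀ t ∈ Set.Icc (0 : ℝ) T, ∀ i,
      (-(calN D R (Phat t) i).submatrix Sum.inr Sum.inr
        - δhat • (1 : Matrix (Fin m₂) (Fin m₂) ℝ)).PosSemidef) :
    ∀ t ∈ Set.Icc (0 : ℝ) T, ∀ i, P t i = Phat t i := by
  have hNP : ∀ t ∈ Set.Icc (0 : ℝ) T, ∀ i, IsUnit (calN D R (P t) i).det := fun t ht i =>
    isUnit_det_calN_of_stronglyRegular D R (hR i) (hPsymm t ht i) hδ (hPreg₁ t ht i)
      (hPreg₂ t ht i)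
  have hNPhat : ∀ t ∈ Set.Icc (0 : ℝ) T, ∀ i, IsUnit (calN D R (Phat t) i).det := fun t ht i =>
    isUnit_det_calN_of_stronglyRegular D R (hR i) (hPhatsymm t ht i) hδhat (hPhatreg₁ t ht i)
      (hPhatreg₂ t ht i)
  have hPd := fun t ht => hasDerivWithinAt_of_forall_entries (hPderiv t ht)
  have hPhatd := fun t ht => hasDerivWithinAt_of_forall_entries (hPhatderiv t ht)
  obtain ⟨K, hK⟩ := exists_norm_riccatiField_sub_le A C Q B D S R pi isCompact_Icc
    (fun t ht => (hPd t ht).continuousWithinAt) (fun t ht => (hPhatd t ht).continuousWithinAt)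
    hNP hNPhat
  have hP' : ∀ t ∈ Set.Icc (0 : ℝ) T, P' t = riccatiField A C Q B D S R pi (P t) :=
    fun t ht => funext fun i => eq_sub_of_add_eq (sub_eq_zero.1 (hPeq t ht i))
  have hPhat' : ∀ t ∈ Set.Icc (0 : ℝ) T, Phat' t = riccatiField A C Q B D S R pi (Phat t) :=
    fun t ht => funext fun i => eq_sub_of_add_eq (sub_eq_zero.1 (hPhateq t ht i))
  have hdiff := eq_zero_of_norm_deriv_le_mul_norm_of_eq_zero_right_end
    (fun t ht => (hPd t ht).sub (hPhatd t ht)) (by simp [funext hPterm, funext hPhatterm])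
    (fun t ht => by rw [hP' t ht, hPhat' t ht]; exact hK t ht)
  exact fun t ht i => sub_eq_zero.1 (congrFun (hdiff t ht) i)

/-- Uniqueness of strongly regular solutions to the coupled differential Riccati
equations with zero terminal condition. -/
theorem CDRE_strongly_regular_solution_unique
    (n m₁ m₂ L : ℕ) (hn : 0 < n) (hm₁ : 0 < m₁) (hm₂ : 0 < m₂) (hL : 0 < L)
    (T : ℝ) (hT : 0 < T)
    (A C : Fin L → Matrix (Fin n) (Fin n) ℝ)
    (B D : Fin L → Matrix (Fin n) (Fin m₁ ⊕ Fin m₂) ℝ)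
    (Q : Fin L → Matrix (Fin n) (Fin n) ℝ) (hQ : ∀ i, (Q i).IsSymm)
    (S : Fin L → Matrix (Fin m₁ ⊕ Fin m₂) (Fin n) ℝ)
    (R : Fin L → Matrix (Fin m₁ ⊕ Fin m₂) (Fin m₁ ⊕ Fin m₂) ℝ) (hR : ∀ i, (R i).IsSymm)
    (pi : Matrix (Fin L) (Fin L) ℝ)
    -- the two solutions and their derivatives
    (P Phat : ℝ → Fin L → Matrix (Fin n) (Fin n) ℝ)
    (P' Phat' : ℝ → Fin L → Matrix (Fin n) (Fin n) ℝ)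
    -- symmetry of the values
    (hPsymm : ∀ t ∈ Set.Icc (0 : ℝ) T, ∀ i, (P t i).IsSymm)
    (hPhatsymm : ∀ t ∈ Set.Icc (0 : ℝ) T, ∀ i, (Phat t i).IsSymm)
    -- continuous differentiability (entrywise)
    (hPderiv : ∀ t ∈ Set.Icc (0 : ℝ) T, ∀ i, ∀ a b : Fin n,
      HasDerivWithinAt (fun s => P s i a b) (P' t i a b) (Set.Icc (0 : ℝ) T) t)
    (hPhatderiv : ∀ t ∈ Set.Icc (0 : ℝ) T, ∀ i, ∀ a b : Fin n,
      HasDerivWithinAt (fun s => Phat s i a b) (Phat' t i a b) (Set.Icc (0 : ℝ) T) t)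
    (hP'cont : ∀ i, ∀ a b : Fin n,
      ContinuousOn (fun t => P' t i a b) (Set.Icc (0 : ℝ) T))
    (hPhat'cont : ∀ i, ∀ a b : Fin n,
      ContinuousOn (fun t => Phat' t i a b) (Set.Icc (0 : ℝ) T))
    -- the coupled differential Riccati equations
    (hPeq : ∀ t ∈ Set.Icc (0 : ℝ) T, ∀ i,
      P' t i + calM A C Q pi (P t) i
        - calL B D C S (P t) i * (calN D R (P t) i)⁻¹ * (calL B D C S (P t) i)ᵀ = 0)
    (hPhateq : ∀ t ∈ Set.Icc (0 : ℝ) T, ∀ i,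
      Phat' t i + calM A C Q pi (Phat t) i
        - calL B D C S (Phat t) i * (calN D R (Phat t) i)⁻¹ * (calL B D C S (Phat t) i)ᵀ = 0)
    -- the terminal conditions
    (hPterm : ∀ i, P T i = 0) (hPhatterm : ∀ i, Phat T i = 0)
    -- strong regularity, with possibly different constants
    (δ δhat : ℝ) (hδ : 0 < δ) (hδhat : 0 < δhat)
    (hPreg₁ : ∀ t ∈ Set.Icc (0 : ℝ) T, ∀ i,
      ((calN D R (P t) i).submatrix Sum.inl Sum.inl
        - δ • (1 : Matrix (Fin m₁) (Fin m₁) ℝ)).PosSemidef)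
    (hPreg₂ : ∀ t ∈ Set.Icc (0 : ℝ) T, ∀ i,
      (-(calN D R (P t) i).submatrix Sum.inr Sum.inr
        - δ • (1 : Matrix (Fin m₂) (Fin m₂) ℝ)).PosSemidef)
    (hPhatreg₁ : ∀ t ∈ Set.Icc (0 : ℝ) T, ∀ i,
      ((calN D R (Phat t) i).submatrix Sum.inl Sum.inl
        - δhat • (1 : Matrix (Fin m₁) (Fin m₁) ℝ)).PosSemidef)
    (hPhatreg₂ : ∀ t ∈ Set.Icc (0 : ℝ) T, ∀ i,
      (-(calN D R (Phat t) i).submatrix Sum.inr Sum.inr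
        - δhat • (1 : Matrix (Fin m₂) (Fin m₂) ℝ)).PosSemidef) :
    ∀ t ∈ Set.Icc (0 : ℝ) T, ∀ i, P t i = Phat t i :=
  CDRE_strongly_regular_solution_unique_general n m₁ m₂ L T A C B D Q S R hR pi P Phat P' Phat'
    hPsymm hPhatsymm hPderiv hPhatderiv hPeq hPhateq hPterm hPhatterm δ δhat hδ hδhat hPreg₁ hPreg₂
    hPhatreg₁ hPhatreg₂
end

section
/- For all positive integers m₁, m₂ and all real numbers δ > 0 and ρ > 0, there exists a constant K > 0 such that: whenever N₁₁ is a symmetric m₁×m₁ real matrix with N₁₁ ⪰ δI, N₂₂ is a symmetric m₂×m₂ real matrix with N₂₂ ⪯ −δI, and N₁₂ is an m₁×m₂ real matrix with operator norm at most ρ, the symmetric block matrix N = [[N₁₁, N₁₂],[N₁₂ᵀ, N₂₂]] is invertible and the operator norm of N⁻¹ is at most K. -/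
/-!
With `J = diag(I, -I)` and `x = (x₁, x₂)`, the cross terms cancel in
`⟪J x, N x⟫ = x₁ᵀ N₁₁ x₁ - x₂ᵀ N₂₂ x₂ ≥ δ ‖x‖²`. Since `J` is an isometry, Cauchy–Schwarz gives
`δ ‖x‖ ≤ ‖N x‖`, so `N` is injective, hence invertible, with `‖N⁻¹‖ ≤ δ⁻¹`, whatever `N₁₂` is.
-/

open Matrix WithLp
open scoped Matrix.Norms.L2Operator

section InnerProductSpace

variable {E : Type*} [NormedAddCommGroup E] [InnerProductSpace ℝ E]

theorem mul_norm_le_norm_of_mul_norm_sq_le_inner {u v y : E} {c : ℝ} (huv : ‖u‖ = ‖v‖)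
    (h : c * ‖v‖ ^ 2 ≤ inner ℝ u y) : c * ‖v‖ ≤ ‖y‖ := by
  rcases (norm_nonneg v).eq_or_lt with hv | hv
  · simp [← hv]
  · refine le_of_mul_le_mul_left ?_ hv
    calc ‖v‖ * (c * ‖v‖) = c * ‖v‖ ^ 2 := by ring
      _ ≤ inner ℝ u y := h
      _ ≤ ‖u‖ * ‖y‖ := real_inner_le_norm u y
      _ = ‖v‖ * ‖y‖ := by rw [huv]

end InnerProductSpace

theorem EuclideanSpace.real_norm_sq_eq_dotProduct {ι : Type*} [Fintype ι]
    (x : EuclideanSpace ℝ ι) : ‖x‖ ^ 2 = ofLp x ⬝ᵥ ofLp x := by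
  rw [← real_inner_self_eq_norm_sq, EuclideanSpace.inner_eq_star_dotProduct, star_trivial]

namespace Matrix

variable {n : Type*} [Fintype n] [DecidableEq n] {𝕜 : Type*} [RCLike 𝕜]

theorem isUnit_of_mul_norm_le_norm_toEuclideanCLM {A : Matrix n n 𝕜} {c : ℝ} (hc : 0 < c)
    (h : ∀ x : EuclideanSpace 𝕜 n, c * ‖x‖ ≤ ‖toEuclideanCLM (n := n) (𝕜 := 𝕜) A x‖) :
    IsUnit A := by
  refine mulVec_injective_iff_isUnit.mp fun v w hvw => ?_
  have hzero : ‖toLp 2 (v - w)‖ ≤ 0 := by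
    have := h (toLp 2 (v - w))
    rw [toEuclideanCLM_toLp, mulVec_sub, hvw, sub_self, toLp_zero, norm_zero] at this
    exact nonpos_of_mul_nonpos_right this hc
  simpa [sub_eq_zero] using hzero

theorem l2_opNorm_inv_le_of_mul_norm_le_norm_toEuclideanCLM {A : Matrix n n 𝕜} {c : ℝ}
    (hc : 0 < c)
    (h : ∀ x : EuclideanSpace 𝕜 n, c * ‖x‖ ≤ ‖toEuclideanCLM (n := n) (𝕜 := 𝕜) A x‖) :
    ‖A⁻¹‖ ≤ c⁻¹ := by
  have hA := isUnit_of_mul_norm_le_norm_toEuclideanCLM hc h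
  rw [← l2_opNorm_toEuclideanCLM]
  refine ContinuousLinearMap.opNorm_le_bound _ (inv_nonneg.mpr hc.le) fun y => ?_
  have hy : toEuclideanCLM (n := n) (𝕜 := 𝕜) A (toEuclideanCLM (n := n) (𝕜 := 𝕜) A⁻¹ y) = y := by
    rw [← mul_apply_eq_comp, ← map_mul, mul_nonsing_inv A ((isUnit_iff_isUnit_det A).mp hA),
      map_one, one_apply_eq_self]
  have := h (toEuclideanCLM (n := n) (𝕜 := 𝕜) A⁻¹ y)
  rw [hy] at this
  rw [inv_mul_eq_div, le_div_iff₀' hc]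
  exact this

theorem PosSemidef.mul_dotProduct_self_le {A : Matrix n n ℝ} {δ : ℝ}
    (h : (A - δ • (1 : Matrix n n ℝ)).PosSemidef) (x : n → ℝ) :
    δ * (x ⬝ᵥ x) ≤ x ⬝ᵥ A *ᵥ x := by
  have := h.dotProduct_mulVec_nonneg x
  rw [star_trivial, sub_mulVec, smul_mulVec, one_mulVec, dotProduct_sub, dotProduct_smul,
    smul_eq_mul] at this
  linarith

variable {m₁ m₂ α : Type*} [Fintype m₁] [Fintype m₂] [CommRing α]

theorem sumElim_neg_dotProduct_fromBlocks_transpose_mulVec (A : Matrix m₁ m₁ α)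
    (B : Matrix m₁ m₂ α) (D : Matrix m₂ m₂ α) (x₁ : m₁ → α) (x₂ : m₂ → α) :
    Sum.elim x₁ (-x₂) ⬝ᵥ fromBlocks A B Bᵀ D *ᵥ Sum.elim x₁ x₂ =
      x₁ ⬝ᵥ A *ᵥ x₁ - x₂ ⬝ᵥ D *ᵥ x₂ := by
  have hcross : x₂ ⬝ᵥ Bᵀ *ᵥ x₁ = x₁ ⬝ᵥ B *ᵥ x₂ := by
    rw [mulVec_transpose, dotProduct_comm, dotProduct_mulVec]
  rw [fromBlocks_mulVec, sumElim_dotProduct_sumElim, Sum.elim_comp_inl, Sum.elim_comp_inr]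
  simp only [dotProduct_add, neg_dotProduct, hcross]
  ring

variable [DecidableEq m₁] [DecidableEq m₂]

theorem mul_norm_le_norm_toEuclideanCLM_fromBlocks {N₁₁ : Matrix m₁ m₁ ℝ}
    {N₁₂ : Matrix m₁ m₂ ℝ} {N₂₂ : Matrix m₂ m₂ ℝ} {δ : ℝ}
    (h₁ : (N₁₁ - δ • (1 : Matrix m₁ m₁ ℝ)).PosSemidef)
    (h₂ : (-N₂₂ - δ • (1 : Matrix m₂ m₂ ℝ)).PosSemidef) (x : EuclideanSpace ℝ (m₁ ⊕ m₂)) :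
    δ * ‖x‖ ≤ ‖toEuclideanCLM (n := m₁ ⊕ m₂) (𝕜 := ℝ) (fromBlocks N₁₁ N₁₂ N₁₂ᵀ N₂₂) x‖ := by
  set x₁ := ofLp x ∘ Sum.inl
  set x₂ := ofLp x ∘ Sum.inr
  have hx : ofLp x = Sum.elim x₁ x₂ := (Sum.elim_comp_inl_inr _).symm
  set u : EuclideanSpace ℝ (m₁ ⊕ m₂) := toLp 2 (Sum.elim x₁ (-x₂))
  have hnorm : ‖x‖ ^ 2 = x₁ ⬝ᵥ x₁ + x₂ ⬝ᵥ x₂ := by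
    rw [EuclideanSpace.real_norm_sq_eq_dotProduct, hx, sumElim_dotProduct_sumElim]
  have hu : ‖u‖ = ‖x‖ := by
    refine (sq_eq_sq₀ (norm_nonneg _) (norm_nonneg _)).mp ?_
    rw [EuclideanSpace.real_norm_sq_eq_dotProduct, hnorm, ofLp_toLp, sumElim_dotProduct_sumElim,
      neg_dotProduct, dotProduct_neg, neg_neg]
  refine mul_norm_le_norm_of_mul_norm_sq_le_inner hu ?_
  have hN₂₂ := h₂.mul_dotProduct_self_le x₂
  rw [neg_mulVec, dotProduct_neg] at hN₂₂
  rw [inner_toEuclideanCLM, ofLp_toLp, hx, sumElim_neg_dotProduct_fromBlocks_transpose_mulVec,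
    hnorm]
  linarith [h₁.mul_dotProduct_self_le x₁]

end Matrix

theorem block_matrix_inverse_uniform_bound_general
    (m₁ m₂ : ℕ)
    (δ ρ : ℝ) (hδ : 0 < δ) :
    ∃ K : ℝ, 0 < K ∧
      ∀ (N₁₁ : Matrix (Fin m₁) (Fin m₁) ℝ) (N₂₂ : Matrix (Fin m₂) (Fin m₂) ℝ)
        (N₁₂ : Matrix (Fin m₁) (Fin m₂) ℝ),
        N₁₁.IsSymm → N₂₂.IsSymm →
        (N₁₁ - δ • (1 : Matrix (Fin m₁) (Fin m₁) ℝ)).PosSemidef →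
        (-N₂₂ - δ • (1 : Matrix (Fin m₂) (Fin m₂) ℝ)).PosSemidef →
        ‖N₁₂‖ ≤ ρ →
        IsUnit (Matrix.fromBlocks N₁₁ N₁₂ N₁₂ᵀ N₂₂) ∧
          ‖(Matrix.fromBlocks N₁₁ N₁₂ N₁₂ᵀ N₂₂)⁻¹‖ ≤ K := by
  refine ⟨δ⁻¹, inv_pos.mpr hδ, fun N₁₁ N₂₂ N₁₂ _ _ h₁ h₂ _ => ?_⟩
  have hcoercive := mul_norm_le_norm_toEuclideanCLM_fromBlocks (N₁₂ := N₁₂) h₁ h₂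
  exact ⟨isUnit_of_mul_norm_le_norm_toEuclideanCLM hδ hcoercive,
    l2_opNorm_inv_le_of_mul_norm_le_norm_toEuclideanCLM hδ hcoercive⟩

/-- A uniform bound, depending only on `m₁, m₂, δ, ρ`, on the (ℓ²-)operator norm of the
inverse of a symmetric block matrix `[[N₁₁, N₁₂],[N₁₂ᵀ, N₂₂]]` with `N₁₁ ⪰ δI`,
`N₂₂ ⪯ −δI` and `‖N₁₂‖ ≤ ρ`. -/
theorem block_matrix_inverse_uniform_bound
    (m₁ m₂ : ℕ) (hm₁ : 0 < m₁) (hm₂ : 0 < m₂)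
    (δ ρ : ℝ) (hδ : 0 < δ) (hρ : 0 < ρ) :
    ∃ K : ℝ, 0 < K ∧
      ∀ (N₁₁ : Matrix (Fin m₁) (Fin m₁) ℝ) (N₂₂ : Matrix (Fin m₂) (Fin m₂) ℝ)
        (N₁₂ : Matrix (Fin m₁) (Fin m₂) ℝ),
        N₁₁.IsSymm → N₂₂.IsSymm →
        (N₁₁ - δ • (1 : Matrix (Fin m₁) (Fin m₁) ℝ)).PosSemidef →
        (-N₂₂ - δ • (1 : Matrix (Fin m₂) (Fin m₂) ℝ)).PosSemidef →
        ‖N₁₂‖ ≤ ρ →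
        IsUnit (Matrix.fromBlocks N₁₁ N₁₂ N₁₂ᵀ N₂₂) ∧
          ‖(Matrix.fromBlocks N₁₁ N₁₂ N₁₂ᵀ N₂₂)⁻¹‖ ≤ K :=
  block_matrix_inverse_uniform_bound_general m₁ m₂ δ ρ hδ
end

section
/- Let μ > 0 and C > 0, and let φ : [0,∞) → ℝ be a continuous nonnegative function such that φ(u) → 0 as u → ∞ and such that for all 0 ≤ b ≤ u, φ(u) ≤ C e^{−μ(u−b)} φ(b) + C ∫_b^u e^{−μ(u−s)} φ(s)² ds. Then there exists a constant K > 0 such that φ(u) ≤ K e^{−μu} for all u ≥ 0. -/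
/-!
Past a point `b` where `C φ` is small, the quadratic term is a small perturbation. Weighting by
`e^{γ(s-b)}` with `γ < μ` and comparing with the maximum `S` of the weighted function on `[b, u]`,
the integral term contributes at most `S / 2`, so `S ≤ 2 C φ(b)`: `φ` decays at any rate `γ < μ`.
Once `2γ > μ`, the weight `e^{μ(s-b)} φ(s)²` is integrable on `[b, ∞)`, and the inequality itself
gives the full rate `μ`; on the compact interval `[0, b]` the function is simply bounded.
-/

open MeasureTheory Real Set

lemma integral_exp_neg_mul_sub_right_le {c : ℝ} (hc : 0 < c) (a b : ℝ) :
    ∫ s in a..b, exp (-c * (b - s)) ≤ 1 / c := by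
  simp_rw [show ∀ s, -c * (b - s) = c * s - c * b by intro s; ring]
  rw [intervalIntegral.integral_comp_mul_sub (fun t => exp t) hc.ne', integral_exp, sub_self,
    exp_zero, smul_eq_mul, inv_mul_eq_div]
  gcongr
  linarith [exp_pos (c * a - c * b)]

lemma integral_exp_neg_mul_sub_left_le {c : ℝ} (hc : 0 < c) (a b : ℝ) :
    ∫ s in a..b, exp (-c * (s - a)) ≤ 1 / c := by
  simp_rw [show ∀ s, -c * (s - a) = c * a - c * s by intro s; ring]
  rw [intervalIntegral.integral_comp_sub_mul (fun t => exp t) hc.ne', integral_exp, sub_self,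
    exp_zero, smul_eq_mul, inv_mul_eq_div]
  gcongr
  linarith [exp_pos (c * a - c * b)]

section
variable {f : ℝ → ℝ} {a b c D : ℝ}

lemma integral_le_div_of_le_mul_exp_neg_mul_sub_right (hc : 0 < c) (hD : 0 ≤ D) (hab : a ≤ b)
    (hf : IntervalIntegrable f volume a b) (hfD : ∀ s ∈ Icc a b, f s ≤ D * exp (-c * (b - s))) :
    ∫ s in a..b, f s ≤ D / c := calc
  ∫ s in a..b, f s ≤ ∫ s in a..b, D * exp (-c * (b - s)) :=
    intervalIntegral.integral_mono_on hab hf (Continuous.intervalIntegrable (by fun_prop) a b) hfD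
  _ ≤ D * (1 / c) := by
    rw [intervalIntegral.integral_const_mul]
    exact mul_le_mul_of_nonneg_left (integral_exp_neg_mul_sub_right_le hc a b) hD
  _ = D / c := mul_one_div D c

lemma integral_le_div_of_le_mul_exp_neg_mul_sub_left (hc : 0 < c) (hD : 0 ≤ D) (hab : a ≤ b)
    (hf : IntervalIntegrable f volume a b) (hfD : ∀ s ∈ Icc a b, f s ≤ D * exp (-c * (s - a))) :
    ∫ s in a..b, f s ≤ D / c := calc
  ∫ s in a..b, f s ≤ ∫ s in a..b, D * exp (-c * (s - a)) :=
    intervalIntegral.integral_mono_on hab hf (Continuous.intervalIntegrable (by fun_prop) a b) hfD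
  _ ≤ D * (1 / c) := by
    rw [intervalIntegral.integral_const_mul]
    exact mul_le_mul_of_nonneg_left (integral_exp_neg_mul_sub_left_le hc a b) hD
  _ = D / c := mul_one_div D c

end

def DuhamelIneq (μ C : ℝ) (φ : ℝ → ℝ) (b : ℝ) : Prop :=
  ∀ u, b ≤ u →
    φ u ≤ C * exp (-μ * (u - b)) * φ b + C * ∫ s in b..u, exp (-μ * (u - s)) * φ s ^ 2

namespace DuhamelIneq

variable {μ C b : ℝ} {φ : ℝ → ℝ}

lemma exp_mul_le (h : DuhamelIneq μ C φ b) (γ : ℝ) {u : ℝ} (hu : b ≤ u) :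
    exp (γ * (u - b)) * φ u ≤ C * exp (-(μ - γ) * (u - b)) * φ b
      + C * ∫ s in b..u, exp (-(μ - γ) * (u - s)) * (φ s * (exp (γ * (s - b)) * φ s)) := by
  have hexp : ∀ s, exp (γ * (u - b)) * exp (-μ * (u - s))
      = exp (-(μ - γ) * (u - s)) * exp (γ * (s - b)) := by
    intro s
    rw [← exp_add, ← exp_add]
    ring_nf
  calc exp (γ * (u - b)) * φ u
      ≤ exp (γ * (u - b)) * (C * exp (-μ * (u - b)) * φ b
          + C * ∫ s in b..u, exp (-μ * (u - s)) * φ s ^ 2) :=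
        mul_le_mul_of_nonneg_left (h u hu) (exp_pos _).le
    _ = C * (exp (γ * (u - b)) * exp (-μ * (u - b))) * φ b
          + C * ∫ s in b..u, exp (γ * (u - b)) * exp (-μ * (u - s)) * φ s ^ 2 := by
        simp_rw [mul_assoc (exp (γ * (u - b))), intervalIntegral.integral_const_mul]
        ring
    _ = _ := by
        rw [← exp_add, show γ * (u - b) + -μ * (u - b) = -(μ - γ) * (u - b) by ring]
        congr 2
        refine intervalIntegral.integral_congr fun s _ => ?_
        simp only [hexp s]
        ring

lemma exp_mul_le_of_small {γ : ℝ} (h : DuhamelIneq μ C φ b) (hC : 0 ≤ C) (hγ : γ < μ)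
    (hφ : ContinuousOn φ (Ici b)) (hφ0 : ∀ s, b ≤ s → 0 ≤ φ s)
    (hsmall : ∀ s, b ≤ s → C * φ s ≤ (μ - γ) / 2) {u : ℝ} (hu : b ≤ u) :
    exp (γ * (u - b)) * φ u ≤ 2 * C * φ b := by
  set ψ : ℝ → ℝ := fun s => exp (γ * (s - b)) * φ s
  have hφu : ContinuousOn φ (Icc b u) := hφ.mono Icc_subset_Ici_self
  obtain ⟨v, hv, hmax⟩ := isCompact_Icc.exists_isMaxOn (nonempty_Icc.2 hu)
    (show ContinuousOn ψ (Icc b u) by fun_prop)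
  suffices ψ v ≤ 2 * C * φ b from (hmax ⟨hu, le_rfl⟩).trans this
  have hψv : 0 ≤ ψ v := mul_nonneg (exp_pos _).le (hφ0 v hv.1)
  have hint : C * ∫ s in b..v, exp (-(μ - γ) * (v - s)) * (φ s * ψ s) ≤ ψ v / 2 := by
    have hμγ : 0 < μ - γ := sub_pos.2 hγ
    rw [← intervalIntegral.integral_const_mul]
    refine (integral_le_div_of_le_mul_exp_neg_mul_sub_right hμγ
      (by positivity : 0 ≤ (μ - γ) / 2 * ψ v) hv.1 ?_ fun s hs => ?_).trans_eq (by field_simp)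
    · refine ContinuousOn.intervalIntegrable ?_
      rw [uIcc_of_le hv.1]
      have : ContinuousOn φ (Icc b v) := hφu.mono (Icc_subset_Icc_right hv.2)
      fun_prop
    · have hψs : ψ s ≤ ψ v := hmax ⟨hs.1, hs.2.trans hv.2⟩
      have hψs0 : 0 ≤ ψ s := mul_nonneg (exp_pos _).le (hφ0 s hs.1)
      calc C * (exp (-(μ - γ) * (v - s)) * (φ s * ψ s))
          = exp (-(μ - γ) * (v - s)) * ((C * φ s) * ψ s) := by ring
        _ ≤ exp (-(μ - γ) * (v - s)) * ((μ - γ) / 2 * ψ v) := by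
          gcongr
          exact hsmall s hs.1
        _ = _ := by ring
  have hdecay : exp (-(μ - γ) * (v - b)) ≤ 1 :=
    exp_le_one_iff.2 (mul_nonpos_of_nonpos_of_nonneg (by linarith) (sub_nonneg.2 hv.1))
  have hCφ : 0 ≤ C * φ b := mul_nonneg hC (hφ0 b le_rfl)
  linarith [h.exp_mul_le γ hv.1, mul_le_mul_of_nonneg_left hdecay hCφ]

lemma exp_mul_le_of_exp_mul_le {ν A : ℝ} (h : DuhamelIneq μ C φ b) (hC : 0 ≤ C) (hν : μ < 2 * ν)
    (hφ : ContinuousOn φ (Ici b)) (hφ0 : ∀ s, b ≤ s → 0 ≤ φ s)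
    (hA : ∀ s, b ≤ s → exp (ν * (s - b)) * φ s ≤ A) {u : ℝ} (hu : b ≤ u) :
    exp (μ * (u - b)) * φ u ≤ C * φ b + C * (A ^ 2 / (2 * ν - μ)) := by
  have hint : ∫ s in b..u, φ s * (exp (μ * (s - b)) * φ s) ≤ A ^ 2 / (2 * ν - μ) := by
    refine integral_le_div_of_le_mul_exp_neg_mul_sub_left (by linarith) (sq_nonneg A) hu ?_
      fun s hs => ?_
    · refine ContinuousOn.intervalIntegrable ?_
      rw [uIcc_of_le hu]
      have : ContinuousOn φ (Icc b u) := hφ.mono Icc_subset_Ici_self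
      fun_prop
    · have hsq : (exp (ν * (s - b)) * φ s) ^ 2 ≤ A ^ 2 :=
        pow_le_pow_left₀ (mul_nonneg (exp_pos _).le (hφ0 s hs.1)) (hA s hs.1) 2
      have hexp : exp (μ * (s - b)) = exp (-(2 * ν - μ) * (s - b)) * exp (ν * (s - b)) ^ 2 := by
        rw [← exp_nat_mul, ← exp_add]
        ring_nf
      calc φ s * (exp (μ * (s - b)) * φ s)
          = exp (-(2 * ν - μ) * (s - b)) * (exp (ν * (s - b)) * φ s) ^ 2 := by rw [hexp]; ring
        _ ≤ A ^ 2 * exp (-(2 * ν - μ) * (s - b)) := by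
          rw [mul_comm (A ^ 2)]
          gcongr
  calc exp (μ * (u - b)) * φ u
      ≤ C * exp (-(μ - μ) * (u - b)) * φ b
        + C * ∫ s in b..u, exp (-(μ - μ) * (u - s)) * (φ s * (exp (μ * (s - b)) * φ s)) :=
        h.exp_mul_le μ hu
    _ = C * φ b + C * ∫ s in b..u, φ s * (exp (μ * (s - b)) * φ s) := by
        simp only [sub_self, neg_zero, zero_mul, exp_zero, mul_one, one_mul]
    _ ≤ C * φ b + C * (A ^ 2 / (2 * ν - μ)) := by gcongr

end DuhamelIneq

lemma exists_pos_le_mul_exp_neg_of_exp_mul_le {f : ℝ → ℝ} {μ b B : ℝ} (hμ : 0 ≤ μ)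
    (hf : ContinuousOn f (Ici 0)) (hB : ∀ u, b ≤ u → exp (μ * (u - b)) * f u ≤ B) :
    ∃ K, 0 < K ∧ ∀ u, 0 ≤ u → f u ≤ K * exp (-μ * u) := by
  obtain ⟨M, hM⟩ := isCompact_Icc.bddAbove_image (hf.mono (Icc_subset_Ici_self : Icc 0 b ⊆ Ici 0))
  have hK : 0 < max (max M B) 1 := lt_max_of_lt_right one_pos
  refine ⟨max (max M B) 1 * exp (μ * b), by positivity, fun u hu => ?_⟩
  rw [mul_assoc, ← exp_add]
  rcases le_total b u with hbu | hub
  · calc f u ≤ B / exp (μ * (u - b)) := (le_div_iff₀' (exp_pos _)).2 (hB u hbu)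
      _ = B * exp (μ * b + -μ * u) := by rw [div_eq_mul_inv, ← exp_neg]; ring_nf
      _ ≤ max (max M B) 1 * exp (μ * b + -μ * u) := by
        gcongr
        exact le_max_of_le_left (le_max_right M B)
  · calc f u ≤ M := hM ⟨u, ⟨hu, hub⟩, rfl⟩
      _ ≤ max (max M B) 1 := le_max_of_le_left (le_max_left M B)
      _ ≤ max (max M B) 1 * exp (μ * b + -μ * u) :=
        le_mul_of_one_le_right hK.le (one_le_exp (by nlinarith))

/-- A continuous nonnegative function on `[0,∞)` vanishing at infinity and satisfying the
integral inequality `φ(u) ≤ C e^{−μ(u−b)} φ(b) + C ∫_b^u e^{−μ(u−s)} φ(s)² ds` decays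
exponentially: `φ(u) ≤ K e^{−μu}` for some `K > 0`. -/
theorem exponential_decay_of_integral_inequality
    (μ C : ℝ) (hμ : 0 < μ) (hC : 0 < C)
    (φ : ℝ → ℝ)
    (hcont : ContinuousOn φ (Set.Ici (0 : ℝ)))
    (hnonneg : ∀ u ∈ Set.Ici (0 : ℝ), 0 ≤ φ u)
    (hlim : Filter.Tendsto φ Filter.atTop (nhds 0))
    (hineq : ∀ b u : ℝ, 0 ≤ b → b ≤ u →
      φ u ≤ C * Real.exp (-μ * (u - b)) * φ b
        + C * ∫ s in b..u, Real.exp (-μ * (u - s)) * φ s ^ 2) :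
    ∃ K : ℝ, 0 < K ∧ ∀ u : ℝ, 0 ≤ u → φ u ≤ K * Real.exp (-μ * u) := by
  obtain ⟨b₁, hb₁⟩ := Filter.eventually_atTop.1 <|
    (hlim.const_mul C).eventually (ge_mem_nhds (by linarith : C * 0 < (μ - 3 / 4 * μ) / 2))
  set b := max b₁ 0
  have hb : 0 ≤ b := le_max_right b₁ 0
  have hD : DuhamelIneq μ C φ b := fun u hu => hineq b u hb hu
  have hφ : ContinuousOn φ (Ici b) := hcont.mono (Ici_subset_Ici.2 hb)
  have hφ0 : ∀ s, b ≤ s → 0 ≤ φ s := fun s hs => hnonneg s (hb.trans hs)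
  -- any rate in `(μ / 2, μ)` would do
  have hrate := fun u => hD.exp_mul_le_of_small (γ := 3 / 4 * μ) hC.le (by linarith) hφ hφ0
    (fun s hs => hb₁ s ((le_max_left b₁ 0).trans hs)) (u := u)
  exact exists_pos_le_mul_exp_neg_of_exp_mul_le hμ.le hcont
    fun u => hD.exp_mul_le_of_exp_mul_le hC.le (by linarith) hφ hφ0 hrate
end

section
/- Let μ > 0, k ≥ 0, and let h : [0,k] → ℝ be a continuous nonnegative function satisfying h(t) ≤ μ/2 + ∫₀ᵗ e^{−μs} h(s)² ds for all t ∈ [0,k]. Then h(t) ≤ μ for all t ∈ [0,k]. -/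
/-!
Put `F t = μ/2 + ∫₀ᵗ e^{-μs} h(s)² ds`, so that `h ≤ F` and `F' = e^{-μt} h² ≤ e^{-μt} F²`.
This Riccati-type inequality says that `1/F - e^{-μt}/μ` is nondecreasing; comparing
with `t = 0` gives `1/F(t) ≥ 2/μ - 1/μ + e^{-μt}/μ ≥ 1/μ`, hence `h ≤ F ≤ μ`.
-/

open MeasureTheory Real Set

lemma hasDerivAt_integral_of_continuousOn {f : ℝ → ℝ} {a b t : ℝ}
    (hf : ContinuousOn f (Icc a b)) (ht : t ∈ Ioo a b) :
    HasDerivAt (fun u => ∫ s in a..u, f s) (f t) t :=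
  intervalIntegral.integral_hasDerivAt_right
    ((hf.mono (Icc_subset_Icc le_rfl ht.2.le)).intervalIntegrable_of_Icc ht.1.le)
    ((hf.mono Ioo_subset_Icc_self).stronglyMeasurableAtFilter isOpen_Ioo t ht)
    (hf.continuousAt (Icc_mem_nhds ht.1 ht.2))

lemma continuousOn_integral_of_continuousOn {f : ℝ → ℝ} {a b : ℝ}
    (hf : ContinuousOn f (Icc a b)) (hab : a ≤ b) :
    ContinuousOn (fun u => ∫ s in a..u, f s) (Icc a b) :=
  (intervalIntegral.continuousOn_primitive_interval' (hf.intervalIntegrable_of_Icc hab)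
    left_mem_uIcc).mono Icc_subset_uIcc

lemma monotoneOn_inv_add_of_hasDerivAt_le_mul_sq {F F' W w : ℝ → ℝ} {a b : ℝ}
    (hF : ContinuousOn F (Icc a b)) (hpos : ∀ t ∈ Icc a b, 0 < F t)
    (hF' : ∀ t ∈ Ioo a b, HasDerivAt F (F' t) t)
    (hW : ContinuousOn W (Icc a b)) (hW' : ∀ t ∈ Ioo a b, HasDerivAt W (w t) t)
    (hle : ∀ t ∈ Ioo a b, F' t ≤ w t * F t ^ 2) :
    MonotoneOn (fun t => (F t)⁻¹ + W t) (Icc a b) := by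
  refine monotoneOn_of_hasDerivWithinAt_nonneg (f' := fun t => -F' t / F t ^ 2 + w t)
    (convex_Icc a b) ((hF.inv₀ fun t ht => (hpos t ht).ne').add hW) (fun t ht => ?_)
    (fun t ht => ?_) <;> rw [interior_Icc] at ht
  · exact (((hF' t ht).inv (hpos t (Ioo_subset_Icc_self ht)).ne').add (hW' t ht)).hasDerivWithinAt
  · have hFt := hpos t (Ioo_subset_Icc_self ht)
    have : F' t / F t ^ 2 ≤ w t := (div_le_iff₀ (by positivity)).2 (hle t ht)
    rw [neg_div]
    linarith

theorem gronwall_type_bound_on_h_general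
    (μ k : ℝ) (hμ : 0 < μ)
    (h : ℝ → ℝ)
    (hcont : ContinuousOn h (Set.Icc (0 : ℝ) k))
    (hnonneg : ∀ t ∈ Set.Icc (0 : ℝ) k, 0 ≤ h t)
    (hineq : ∀ t ∈ Set.Icc (0 : ℝ) k,
      h t ≤ μ / 2 + ∫ s in (0 : ℝ)..t, Real.exp (-μ * s) * h s ^ 2) :
    ∀ t ∈ Set.Icc (0 : ℝ) k, h t ≤ μ := by
  intro t ht
  set F : ℝ → ℝ := fun t => μ / 2 + ∫ s in (0 : ℝ)..t, exp (-μ * s) * h s ^ 2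
  have hg : ContinuousOn (fun s => exp (-μ * s) * h s ^ 2) (Icc 0 k) := by fun_prop
  have hFpos : ∀ t ∈ Icc 0 k, 0 < F t := fun t ht =>
    add_pos_of_pos_of_nonneg (half_pos hμ)
      (intervalIntegral.integral_nonneg ht.1 fun s _ => by positivity)
  have hmono := monotoneOn_inv_add_of_hasDerivAt_le_mul_sq (F := F)
    (W := fun t => -exp (-μ * t) / μ) (w := fun t => exp (-μ * t))
    (continuousOn_const.add (continuousOn_integral_of_continuousOn hg (ht.1.trans ht.2))) hFpos
    (fun t ht => (hasDerivAt_integral_of_continuousOn hg ht).const_add _) (by fun_prop)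
    (fun t _ => (((hasDerivAt_id' t).const_mul (-μ)).exp.neg.div_const μ).congr_deriv
      (by field_simp))
    (fun t ht => by
      have ht' := Ioo_subset_Icc_self ht
      gcongr
      exacts [hnonneg t ht', hineq t ht'])
  have hcompare := hmono ⟨le_rfl, ht.1.trans ht.2⟩ ht ht.1
  have hF0 : F 0 = μ / 2 := by simp [F]
  simp only [hF0, mul_zero, exp_zero, inv_div] at hcompare
  have hinv : μ⁻¹ ≤ (F t)⁻¹ := by
    have : 0 ≤ exp (-μ * t) / μ := by positivity
    have : 2 / μ + -1 / μ = μ⁻¹ := by field_simp; norm_num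
    have : -exp (-μ * t) / μ = -(exp (-μ * t) / μ) := neg_div _ _
    linarith
  exact (hineq t ht).trans ((inv_le_inv₀ hμ (hFpos t ht)).1 hinv)

/-- If `h ≥ 0` is continuous on `[0,k]` and `h(t) ≤ μ/2 + ∫₀ᵗ e^{−μs} h(s)² ds` there,
then `h ≤ μ` on `[0,k]`. -/
theorem gronwall_type_bound_on_h
    (μ k : ℝ) (hμ : 0 < μ) (hk : 0 ≤ k)
    (h : ℝ → ℝ)
    (hcont : ContinuousOn h (Set.Icc (0 : ℝ) k))
    (hnonneg : ∀ t ∈ Set.Icc (0 : ℝ) k, 0 ≤ h t)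
    (hineq : ∀ t ∈ Set.Icc (0 : ℝ) k,
      h t ≤ μ / 2 + ∫ s in (0 : ℝ)..t, Real.exp (-μ * s) * h s ^ 2) :
    ∀ t ∈ Set.Icc (0 : ℝ) k, h t ≤ μ :=
  gronwall_type_bound_on_h_general μ k hμ h hcont hnonneg hineq
end

section
/- Let μ > 0, k ≥ 0, and let H : [0,k] → ℝ be continuously differentiable with H(0) = 0, H(t) ≥ 0 for all t ∈ [0,k], and H′(t) ≤ e^{−μt} (μ/2 + H(t))² for all t ∈ [0,k]. Then H(t) ≤ μ/2 for all t ∈ [0,k]. -/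
/-!
With `u = μ/2 + H > 0`, the hypothesis reads `u' ≤ e^{-μt} u²`, i.e. `(1/u)' ≥ -e^{-μt}`.
Integrating from `0`, where `1/u = 2/μ`, gives `1/u(t) ≥ (1 + e^{-μt})/μ > 1/μ`, so `u(t) < μ`.
-/

open Set

theorem monotoneOn_inv_add_of_hasDerivWithinAt_le_mul_sq {D : Set ℝ} (hD : Convex ℝ D)
    {u u' g G : ℝ → ℝ} (hu : ∀ x ∈ D, HasDerivWithinAt u (u' x) D x)
    (hG : ∀ x ∈ D, HasDerivWithinAt G (g x) D x) (hpos : ∀ x ∈ D, 0 < u x)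
    (hle : ∀ x ∈ D, u' x ≤ g x * u x ^ 2) :
    MonotoneOn (fun x => (u x)⁻¹ + G x) D := by
  have hderiv : ∀ x ∈ D,
      HasDerivWithinAt (fun x => (u x)⁻¹ + G x) (-u' x / u x ^ 2 + g x) D x :=
    fun x hx => ((hu x hx).inv (hpos x hx).ne').add (hG x hx)
  refine monotoneOn_of_hasDerivWithinAt_nonneg hD (HasDerivWithinAt.continuousOn hderiv)
    (fun x hx => (hderiv x (interior_subset hx)).mono interior_subset) fun x hx => ?_
  have hx := interior_subset hx
  have hsq : 0 < u x ^ 2 := pow_pos (hpos x hx) 2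
  have : u' x / u x ^ 2 ≤ g x := (div_le_iff₀ hsq).mpr (hle x hx)
  linarith [neg_div (u x ^ 2) (u' x)]

theorem hasDerivAt_neg_exp_neg_mul_div {μ : ℝ} (hμ : μ ≠ 0) (x : ℝ) :
    HasDerivAt (fun x => -Real.exp (-μ * x) / μ) (Real.exp (-μ * x)) x := by
  have h : HasDerivAt (fun x => -Real.exp (-μ * x) / μ) (-(Real.exp (-μ * x) * (-μ * 1)) / μ) x :=
    (((hasDerivAt_id x).const_mul (-μ)).exp.neg).div_const μ
  convert h using 1
  field_simp

theorem riccati_comparison_bound_on_H_general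
    (μ k : ℝ) (hμ : 0 < μ)
    (H H' : ℝ → ℝ)
    (hH0 : H 0 = 0)
    (hHnonneg : ∀ t ∈ Set.Icc (0 : ℝ) k, 0 ≤ H t)
    (hHderiv : ∀ t ∈ Set.Icc (0 : ℝ) k,
      HasDerivWithinAt H (H' t) (Set.Icc (0 : ℝ) k) t)
    (hH'le : ∀ t ∈ Set.Icc (0 : ℝ) k,
      H' t ≤ Real.exp (-μ * t) * (μ / 2 + H t) ^ 2) :
    ∀ t ∈ Set.Icc (0 : ℝ) k, H t ≤ μ / 2 := by
  intro t ht
  have hpos : ∀ s ∈ Icc 0 k, 0 < μ / 2 + H s := fun s hs => by linarith [hHnonneg s hs]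
  have hmono := monotoneOn_inv_add_of_hasDerivWithinAt_le_mul_sq (convex_Icc 0 k)
    (fun s hs => (hHderiv s hs).const_add (μ / 2))
    (fun s _ => (hasDerivAt_neg_exp_neg_mul_div hμ.ne' s).hasDerivWithinAt) hpos hH'le
  have hcompare := hmono ⟨le_rfl, ht.1.trans ht.2⟩ ht ht.1
  simp only [hH0, add_zero, mul_zero, Real.exp_zero, inv_div] at hcompare
  have hinv : μ⁻¹ < (μ / 2 + H t)⁻¹ := by
    have hexp : 0 < Real.exp (-μ * t) / μ := by positivity
    rw [inv_eq_one_div]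
    linarith [show 2 / μ + -1 / μ = 1 / μ by ring, neg_div μ (Real.exp (-μ * t))]
  linarith [(inv_lt_inv₀ hμ (hpos t ht)).mp hinv]

/-- If `H` is continuously differentiable on `[0,k]` with `H(0) = 0`, `H ≥ 0`, and
`H′(t) ≤ e^{−μt}(μ/2 + H(t))²`, then `H ≤ μ/2` on `[0,k]`. -/
theorem riccati_comparison_bound_on_H
    (μ k : ℝ) (hμ : 0 < μ) (hk : 0 ≤ k)
    (H H' : ℝ → ℝ)
    (hH0 : H 0 = 0)
    (hHnonneg : ∀ t ∈ Set.Icc (0 : ℝ) k, 0 ≤ H t)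
    (hHderiv : ∀ t ∈ Set.Icc (0 : ℝ) k,
      HasDerivWithinAt H (H' t) (Set.Icc (0 : ℝ) k) t)
    (hH'cont : ContinuousOn H' (Set.Icc (0 : ℝ) k))
    (hH'le : ∀ t ∈ Set.Icc (0 : ℝ) k,
      H' t ≤ Real.exp (-μ * t) * (μ / 2 + H t) ^ 2) :
    ∀ t ∈ Set.Icc (0 : ℝ) k, H t ≤ μ / 2 :=
  riccati_comparison_bound_on_H_general μ k hμ H H' hH0 hHnonneg hHderiv hH'le
end
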